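/- A subspace inclusion A ⊆ X is a quasi-homeomorphism if and only if A is dense in X with respect to the Skula topology on X. -/

import Mathlib

open TopologicalSpace

/-- A continuous map is a quasi-homeomorphism if the preimage map on open
sets is a bijection. -/
def IsQuasiHomeomorphism {X Y : Type*} [TopologicalSpace X] [TopologicalSpace Y]
    (f : X → Y) : Prop :=
  Continuous f ∧
    (∀ U V : Set Y, IsOpen U → IsOpen V → f ⁻¹' U = f ⁻¹' V → U = V) ∧
    (∀ W : Set X, IsOpen W → ∃ U : Set Y, IsOpen U ∧ f ⁻¹' U = W)

/-- The Skula topology on a space: the topology generated by the open sets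
together with the closed sets of the original topology. -/
def skulaTopology (X : Type*) [t : TopologicalSpace X] : TopologicalSpace X :=
  TopologicalSpace.generateFrom {s : Set X | IsOpen s ∨ IsClosed s}

lemma skula_open_structure {X : Type*} [TopologicalSpace X] {S : Set X}
    (hS : TopologicalSpace.GenerateOpen {s : Set X | IsOpen s ∨ IsClosed s} S) :
    ∀ x ∈ S, ∃ U C : Set X, IsOpen U ∧ IsClosed C ∧ x ∈ U ∩ C ∧ U ∩ C ⊆ S := by
  induction hS with
  | basic s hs =>
    intro x hx
    cases hs with
    | inl h => exact ⟨s, Set.univ, h, isClosed_univ, ⟨hx, trivial⟩, fun y hy => hy.1⟩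
    | inr h => exact ⟨Set.univ, s, isOpen_univ, h, ⟨trivial, hx⟩, fun y hy => hy.2⟩
  | univ =>
    intro x _
    exact ⟨Set.univ, Set.univ, isOpen_univ, isClosed_univ, ⟨trivial, trivial⟩,
      fun _ _ => trivial⟩
  | inter s t _ _ ihs iht =>
    intro x hx
    obtain ⟨U1, C1, hU1, hC1, hx1, hsub1⟩ := ihs x hx.1
    obtain ⟨U2, C2, hU2, hC2, hx2, hsub2⟩ := iht x hx.2
    exact ⟨U1 ∩ U2, C1 ∩ C2, hU1.inter hU2, hC1.inter hC2,
      ⟨⟨hx1.1, hx2.1⟩, ⟨hx1.2, hx2.2⟩⟩,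
      fun y hy => ⟨hsub1 ⟨hy.1.1, hy.2.1⟩, hsub2 ⟨hy.1.2, hy.2.2⟩⟩⟩
  | sUnion S hS ih =>
    intro x hx
    obtain ⟨s, hsS, hxs⟩ := hx
    obtain ⟨U, C, h1, h2, h3, h4⟩ := ih s hsS x hxs
    exact ⟨U, C, h1, h2, h3, fun y hy => ⟨s, hsS, h4 hy⟩⟩

theorem subspace_quasiHomeomorphism_iff_skulaDense
    {X : Type*} [TopologicalSpace X] (A : Set X) :
    IsQuasiHomeomorphism ((↑) : A → X) ↔ @Dense X (skulaTopology X) A := by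
  constructor
  · rintro ⟨-, hinj, -⟩
    have key : ∀ U C : Set X, IsOpen U → IsClosed C → (U ∩ C).Nonempty →
        (U ∩ C ∩ A).Nonempty := by
      intro U C hU hC hne
      by_contra h
      rw [Set.not_nonempty_iff_eq_empty] at h
      have h2 : ((↑) : A → X) ⁻¹' U = ((↑) : A → X) ⁻¹' (U ∩ Cᶜ) := by
        ext ⟨a, ha⟩
        simp only [Set.mem_preimage, Set.mem_inter_iff, Set.mem_compl_iff]
        constructor
        · intro haU
          refine ⟨haU, fun haC => ?_⟩
          exact Set.eq_empty_iff_forall_notMem.mp h a ⟨⟨haU, haC⟩, ha⟩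
        · exact fun h => h.1
      have heq := hinj U (U ∩ Cᶜ) hU (hU.inter hC.isOpen_compl) h2
      obtain ⟨x, hxU, hxC⟩ := hne
      have : x ∈ U ∩ Cᶜ := heq ▸ hxU
      exact this.2 hxC
    rw [@dense_iff_inter_open X (skulaTopology X) A]
    intro S hS hSne
    obtain ⟨x, hx⟩ := hSne
    have hS' : TopologicalSpace.GenerateOpen {s : Set X | IsOpen s ∨ IsClosed s} S := hS
    obtain ⟨U, C, hU, hC, hxUC, hsub⟩ := skula_open_structure hS' x hx
    obtain ⟨y, hy⟩ := key U C hU hC ⟨x, hxUC⟩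
    exact ⟨y, hsub hy.1, hy.2⟩
  · intro hdense
    have meets : ∀ U C : Set X, IsOpen U → IsClosed C → (U ∩ C).Nonempty →
        (U ∩ C ∩ A).Nonempty := by
      intro U C hU hC hne
      have hop : TopologicalSpace.GenerateOpen {s : Set X | IsOpen s ∨ IsClosed s} (U ∩ C) :=
        TopologicalSpace.GenerateOpen.inter U C
          (TopologicalSpace.GenerateOpen.basic U (Or.inl hU))
          (TopologicalSpace.GenerateOpen.basic C (Or.inr hC))
      exact (@dense_iff_inter_open X (skulaTopology X) A).mp hdense _ hop hne
    refine ⟨continuous_subtype_val, ?_, ?_⟩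
    · have sub : ∀ U V : Set X, IsOpen U → IsOpen V →
          ((↑) : A → X) ⁻¹' U = ((↑) : A → X) ⁻¹' V → U ⊆ V := by
        intro U V hU hV h x hxU
        by_contra hxV
        obtain ⟨y, ⟨hyU, hyVc⟩, hyA⟩ := meets U Vᶜ hU hV.isClosed_compl ⟨x, hxU, hxV⟩
        have hmem : (⟨y, hyA⟩ : A) ∈ ((↑) : A → X) ⁻¹' U := hyU
        rw [h] at hmem
        exact hyVc hmem
      intro U V hU hV h
      exact le_antisymm (sub U V hU hV h) (sub V U hV hU h.symm)
    · intro W hW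
      obtain ⟨U, hU, hUW⟩ := isOpen_induced_iff.mp hW
      exact ⟨U, hU, hUW⟩
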